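/- Let T₁, T₂ be commuting contractions on H with T₁ pure (T₁*^n → 0 strongly), and suppose U = [[A, B], [C, D]] : D₁ ⊕ D₂ → D₁ ⊕ D₂ is a unitary (or isometric) operator satisfying A Δ*(T₁)h + B Δ*(T₂)T₁*h = Δ*(T₁)T₂*h and C Δ*(T₁)h + D Δ*(T₂)T₁*h = Δ*(T₂)h for all h ∈ H. Then Δ*(T₁) T₂* = A Δ*(T₁) + Σ_{n=0}^∞ B Dⁿ C Δ*(T₁) T₁*^{n+1}, where the series converges in the strong operator topology. -/
import Mathlib


open ContinuousLinearMap Filter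

variable {H : Type*} [NormedAddCommGroup H] [InnerProductSpace ℂ H] [CompleteSpace H]

/-- The defect operator `Δ*(T) = (I - T T*)^{1/2}`. -/
noncomputable def defect (T : H →L[ℂ] H) : H →L[ℂ] H :=
  CFC.sqrt (1 - T * ContinuousLinearMap.adjoint T)

theorem defect_series_identity (T₁ T₂ A B C D : H →L[ℂ] H)
    (h₁ : ‖T₁‖ ≤ 1) (h₂ : ‖T₂‖ ≤ 1) (hc : T₁ * T₂ = T₂ * T₁)
    (hpure : ∀ h : H, Tendsto (fun n : ℕ => (adjoint T₁ ^ n) h) atTop (nhds 0))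
    (hB : ‖B‖ ≤ 1) (hD : ‖D‖ ≤ 1)
    (hrow1 : ∀ h : H, A (defect T₁ h) + B (defect T₂ (adjoint T₁ h)) =
      defect T₁ (adjoint T₂ h))
    (hrow2 : ∀ h : H, C (defect T₁ h) + D (defect T₂ (adjoint T₁ h)) = defect T₂ h)
    (h : H) :
    Tendsto (fun m : ℕ => A (defect T₁ h) +
        ∑ n ∈ Finset.range m, B ((D ^ n) (C (defect T₁ ((adjoint T₁ ^ (n + 1)) h)))))
      atTop (nhds (defect T₁ (adjoint T₂ h))) := by
  have hpow : ∀ k : ℕ, adjoint T₁ ((adjoint T₁ ^ k) h) = (adjoint T₁ ^ (k + 1)) h := by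
    intro k
    rw [pow_succ']
    rfl
  have key : ∀ m : ℕ, A (defect T₁ h) +
      ∑ n ∈ Finset.range m, B ((D ^ n) (C (defect T₁ ((adjoint T₁ ^ (n + 1)) h)))) =
      defect T₁ (adjoint T₂ h) -
        B ((D ^ m) (defect T₂ ((adjoint T₁ ^ (m + 1)) h))) := by
    intro m
    induction m with
    | zero =>
        simp only [Finset.range_zero, Finset.sum_empty, add_zero, pow_zero, pow_one,
          zero_add, ContinuousLinearMap.one_apply]
        linear_combination (norm := abel) hrow1 h
    | succ m ih =>
        rw [Finset.sum_range_succ, ← add_assoc, ih]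
        have hr := hrow2 ((adjoint T₁ ^ (m + 1)) h)
        rw [hpow (m + 1)] at hr
        have hC : C (defect T₁ ((adjoint T₁ ^ (m + 1)) h)) =
            defect T₂ ((adjoint T₁ ^ (m + 1)) h) -
              D (defect T₂ ((adjoint T₁ ^ (m + 1 + 1)) h)) := by
          linear_combination (norm := abel) hr
        rw [hC, map_sub, map_sub]
        have hDpow : (D ^ m) (D (defect T₂ ((adjoint T₁ ^ (m + 1 + 1)) h))) =
            (D ^ (m + 1)) (defect T₂ ((adjoint T₁ ^ (m + 1 + 1)) h)) := by
          rw [pow_succ]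
          rfl
        rw [hDpow]
        abel
  simp only [key]
  have hDp : ∀ (m : ℕ) (x : H), ‖(D ^ m) x‖ ≤ ‖x‖ := by
    intro m
    induction m with
    | zero => intro x; simp
    | succ m ih =>
        intro x
        rw [pow_succ]
        calc ‖(D ^ m * D) x‖ = ‖(D ^ m) (D x)‖ := rfl
          _ ≤ ‖D x‖ := ih (D x)
          _ ≤ ‖D‖ * ‖x‖ := le_opNorm _ _
          _ ≤ 1 * ‖x‖ := by gcongr
          _ = ‖x‖ := one_mul _
  have hrem : Tendsto (fun m : ℕ =>
      B ((D ^ m) (defect T₂ ((adjoint T₁ ^ (m + 1)) h)))) atTop (nhds 0) := by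
    have htail : Tendsto (fun m : ℕ => (adjoint T₁ ^ (m + 1)) h) atTop (nhds 0) :=
      (hpure h).comp (tendsto_add_atTop_nat 1)
    have hnorm : Tendsto (fun m : ℕ => ‖defect T₂‖ * ‖(adjoint T₁ ^ (m + 1)) h‖)
        atTop (nhds 0) := by
      have := (tendsto_norm_zero.comp htail).const_mul ‖defect T₂‖
      simpa using this
    refine squeeze_zero_norm (fun m => ?_) hnorm
    calc ‖B ((D ^ m) (defect T₂ ((adjoint T₁ ^ (m + 1)) h)))‖
        ≤ ‖B‖ * ‖(D ^ m) (defect T₂ ((adjoint T₁ ^ (m + 1)) h))‖ := le_opNorm _ _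
      _ ≤ 1 * ‖defect T₂ ((adjoint T₁ ^ (m + 1)) h)‖ := by
          gcongr
          exact hDp _ _
      _ ≤ 1 * (‖defect T₂‖ * ‖(adjoint T₁ ^ (m + 1)) h‖) := by
          gcongr
          exact le_opNorm _ _
      _ = ‖defect T₂‖ * ‖(adjoint T₁ ^ (m + 1)) h‖ := one_mul _
  have := (tendsto_const_nhds (x := defect T₁ (adjoint T₂ h))
      (f := atTop (α := ℕ))).sub hrem
  simpa using this
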